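/- Let P be a shortest uv-trail of a uv-straight graph G with twist pair (s,t), and let a be the vertex of P[u,s] with h(a) = h(t). Let S be a monotone uc-path of G containing a with h(c) ≥ h(s), and let T be a monotone tv-path of G such that S minus c is anticomplete to T and S is anticomplete to T minus t. Then the prefix S[u,x] of S, where x is the vertex of S with h(x) = h(s), is a sidetrack for P. -/

import Mathlib

open SimpleGraph

variable {V : Type*}

/-- A walk is monotone if its vertices have pairwise distinct heights. -/
def MonoWalk (G : SimpleGraph V) (u : V) {x y : V} (W : G.Walk x y) : Prop :=
  (W.support.map (fun z => G.dist u z)).Nodup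

/-- `P` is a shortest `x`-`y` path of `G`. -/
def IsShortestPath (G : SimpleGraph V) {x y : V} (P : G.Walk x y) : Prop :=
  P.IsPath ∧ P.length = G.dist x y

/-- `P` is an induced path of `G`: a path that equals the subgraph of `G`
induced by its vertex set. -/
def IsInducedPath (G : SimpleGraph V) {x y : V} (P : G.Walk x y) : Prop :=
  P.IsPath ∧ ∀ a b : V, a ∈ P.support → b ∈ P.support → G.Adj a b → P.toSubgraph.Adj a b

/-- A `uv`-trail of `G`: an induced `uv`-path of `G` that is not a shortest
`uv`-path of `G`. -/
def IsTrailPath (G : SimpleGraph V) (u v : V) (P : G.Walk u v) : Prop :=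
  IsInducedPath G P ∧ ¬ IsShortestPath G P

/-- A shortest `uv`-trail of `G`: a `uv`-trail of minimum number of edges. -/
def IsShortestTrail (G : SimpleGraph V) (u v : V) (P : G.Walk u v) : Prop :=
  IsTrailPath G u v P ∧ ∀ Q : G.Walk u v, IsTrailPath G u v Q → P.length ≤ Q.length

/-- `G` is `uv`-straight: every vertex lies on a shortest `uv`-path of `G`. -/
def Straight (G : SimpleGraph V) (u v : V) : Prop :=
  ∀ x : V, ∃ P : G.Walk u v, IsShortestPath G P ∧ x ∈ P.support

/-- Vertex sets `X` and `Y` are anticomplete in `G`: they are disjoint and there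
is no edge of `G` between them. -/
def Anticomplete (G : SimpleGraph V) (X Y : Set V) : Prop :=
  ∀ x ∈ X, ∀ y ∈ Y, x ≠ y ∧ ¬ G.Adj x y

/-- `x` and `y` are connected in the subgraph of `G` induced by `A`. -/
def ConnIn (G : SimpleGraph V) (A : Set V) (x y : V) : Prop :=
  ∃ W : G.Walk x y, ∀ z ∈ W.support, z ∈ A

/-- The closed neighborhood `N_G[A]` of a vertex set `A`. -/
def closedNbhd (G : SimpleGraph V) (A : Set V) : Set V :=
  {y | y ∈ A ∨ ∃ x ∈ A, G.Adj x y}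

/-- `(s, t)` is the twist pair of the `uv`-path `P`: `P[u,s]` is the maximal
monotone prefix of `P` and `P[t,v]` is the maximal monotone suffix of `P`. -/
def IsTwistPair [DecidableEq V] (G : SimpleGraph V) (u v : V) (P : G.Walk u v)
    (s t : V) : Prop :=
  ∃ (hs : s ∈ P.support) (ht : t ∈ P.support),
    MonoWalk G u (P.takeUntil s hs) ∧ MonoWalk G u (P.dropUntil t ht) ∧
    (∀ (s' : V) (hs' : s' ∈ P.support), MonoWalk G u (P.takeUntil s' hs') →
      (P.takeUntil s' hs').length ≤ (P.takeUntil s hs).length) ∧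
    (∀ (t' : V) (ht' : t' ∈ P.support), MonoWalk G u (P.dropUntil t' ht') →
      (P.dropUntil t' ht').length ≤ (P.dropUntil t ht).length)

/-- `(W1, W2)` is a pair of wings for the quadruple `(a, b, c, d)` in `G`
(with respect to heights measured from `u`): `W1` is a monotone `c`-`a*`-path
containing `a`, `W2` is a monotone `b`-`d*`-path containing `d`,
`h(a*) + 1 = h(a) = h(b) ≤ h(c) = h(d) = h(d*) - 1`, `W1 - c` is anticomplete
to `W2`, and `W1` is anticomplete to `W2 - b`. -/
def IsWingPair (G : SimpleGraph V) (u : V) (a b c d : V) {astar dstar : V}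
    (W1 : G.Walk c astar) (W2 : G.Walk b dstar) : Prop :=
  W1.IsPath ∧ W2.IsPath ∧ MonoWalk G u W1 ∧ MonoWalk G u W2 ∧
  a ∈ W1.support ∧ d ∈ W2.support ∧
  G.dist u astar + 1 = G.dist u a ∧ G.dist u a = G.dist u b ∧
  G.dist u b ≤ G.dist u c ∧ G.dist u c = G.dist u d ∧
  G.dist u d + 1 = G.dist u dstar ∧
  Anticomplete G {x | x ∈ W1.support ∧ x ≠ c} {x | x ∈ W2.support} ∧
  Anticomplete G {x | x ∈ W1.support} {x | x ∈ W2.support ∧ x ≠ b}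

/-- The quadruple `(a, b, c, d)` is winged in `G`. -/
def Winged (G : SimpleGraph V) (u : V) (a b c d : V) : Prop :=
  ∃ (astar dstar : V) (W1 : G.Walk c astar) (W2 : G.Walk b dstar),
    IsWingPair G u a b c d W1 W2

/-- The quadruple `(a, b, c, d)` admits a pair of wings `(W1, W2)` in `G` with
`W1` anticomplete to `W2`. -/
def WingedAnti (G : SimpleGraph V) (u : V) (a b c d : V) : Prop :=
  ∃ (astar dstar : V) (W1 : G.Walk c astar) (W2 : G.Walk b dstar),
    IsWingPair G u a b c d W1 W2 ∧
    Anticomplete G {x | x ∈ W1.support} {x | x ∈ W2.support}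

/-- For a `uv`-trail `P` of a `uv`-straight graph `G` with twist pair `(s, t)`,
a monotone `uc`-path `S` of `G` with `h(c) = h(s)` is a sidetrack for `P` if
(S1) `G` contains a monotone `tv`-path `T` with `S - c` anticomplete to `T` and
`S` anticomplete to `T - t`, and (S2) `S` contains the vertex `a` of `P[u,s]`
with `h(a) = h(t)`. -/
def IsSidetrack [DecidableEq V] (G : SimpleGraph V) (u v : V) (P : G.Walk u v)
    (s t : V) {c : V} (S : G.Walk u c) : Prop :=
  S.IsPath ∧ MonoWalk G u S ∧ G.dist u c = G.dist u s ∧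
  (∃ (T : G.Walk t v), T.IsPath ∧ MonoWalk G u T ∧
    Anticomplete G {x | x ∈ S.support ∧ x ≠ c} {x | x ∈ T.support} ∧
    Anticomplete G {x | x ∈ S.support} {x | x ∈ T.support ∧ x ≠ t}) ∧
  (∀ (hs : s ∈ P.support) (a : V),
    a ∈ (P.takeUntil s hs).support → G.dist u a = G.dist u t → a ∈ S.support)

/-!
Along a monotone path from `u` the heights are exactly `0, 1, …, n` (they start at `0`, grow by at
most one per edge and never repeat), so a vertex of such a path is determined by its height and
sits at the position given by it. Hence the prefix `S[u,x]` contains every vertex of `S` of height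
at most `h(s)`, in particular `a`, the only vertex of `P[u,s]` of height `h(t)`; and it misses `c`
unless `x = c`, so the anticompleteness conditions pass from `S` to `S[u,x]`.
-/

namespace MonoWalk

variable {G : SimpleGraph V} {u x y z : V}

lemma of_append {w : V} {p : G.Walk u w} {q : G.Walk w y} (h : MonoWalk G u (p.append q)) :
    MonoWalk G u p := by
  unfold MonoWalk at *
  rw [Walk.support_append, List.map_append] at h
  exact (List.nodup_append.mp h).1

lemma takeUntil [DecidableEq V] {W : G.Walk u y} (hW : MonoWalk G u W) (hx : x ∈ W.support) :
    MonoWalk G u (W.takeUntil x hx) :=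
  of_append (q := W.dropUntil x hx) (by rwa [Walk.take_spec])

lemma map_dist_support {W : G.Walk u y} (hW : MonoWalk G u W) :
    W.support.map (G.dist u) = List.range (W.length + 1) := by
  induction W using Walk.concatRec with
  | Hnil => simp
  | @Hconcat u v w p h ih =>
    have hp := ih (of_append (by rwa [Walk.concat_eq_append] at hW))
    have hnew : G.dist u w ∉ List.range (p.length + 1) := by
      unfold MonoWalk at hW
      rw [Walk.support_concat, List.map_append, hp] at hW
      exact fun hmem => List.disjoint_of_nodup_append hW hmem (List.mem_singleton_self _)
    have hle : G.dist u w ≤ p.length + 1 := by simpa using dist_le (p.concat h)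
    rw [Walk.support_concat, List.map_append, hp, Walk.length_concat,
      List.range_succ (n := p.length + 1)]
    simp only [List.mem_range, not_lt] at hnew
    simp only [List.map_cons, List.map_nil]
    congr 2
    omega

lemma dist_eq_length {W : G.Walk u y} (hW : MonoWalk G u W) : G.dist u y = W.length := by
  have h := congrArg List.getLast? (map_dist_support hW)
  rw [List.getLast?_map, List.getLast?_eq_some_getLast W.support_ne_nil, W.getLast_support,
    List.range_succ, List.getLast?_concat] at h
  exact Option.some_injective _ h

lemma dist_le_of_mem_support {W : G.Walk u y} (hW : MonoWalk G u W) (hz : z ∈ W.support) :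
    G.dist u z ≤ G.dist u y := by
  have h := List.mem_map_of_mem (f := G.dist u) hz
  rw [map_dist_support hW, List.mem_range, ← dist_eq_length hW] at h
  omega

lemma eq_of_dist_eq {W : G.Walk u y} (hW : MonoWalk G u W) (hx : x ∈ W.support)
    (hz : z ∈ W.support) (h : G.dist u x = G.dist u z) : x = z :=
  List.inj_on_of_nodup_map hW hx hz h

lemma mem_support_takeUntil [DecidableEq V] {W : G.Walk u y} (hW : MonoWalk G u W)
    (hx : x ∈ W.support) (hz : z ∈ W.support) (h : G.dist u z ≤ G.dist u x) :
    z ∈ (W.takeUntil x hx).support := by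
  have hT := hW.takeUntil hx
  have hmem : G.dist u z ∈ (W.takeUntil x hx).support.map (G.dist u) := by
    rw [map_dist_support hT, List.mem_range, ← dist_eq_length hT]
    omega
  obtain ⟨z', hz', hz'z⟩ := List.mem_map.mp hmem
  rwa [← hW.eq_of_dist_eq (W.support_takeUntil_subset_support hx hz') hz hz'z]

lemma ne_of_mem_support_takeUntil [DecidableEq V] {W : G.Walk u y} (hW : MonoWalk G u W)
    (hx : x ∈ W.support) (hz : z ∈ (W.takeUntil x hx).support) (hzx : z ≠ x) : z ≠ y := by
  rintro rfl
  have hzx' := (hW.takeUntil hx).dist_le_of_mem_support hz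
  exact hzx (hW.eq_of_dist_eq W.end_mem_support hx
    (le_antisymm hzx' (hW.dist_le_of_mem_support hx)))

end MonoWalk

lemma Anticomplete.mono {G : SimpleGraph V} {X X' Y Y' : Set V} (h : Anticomplete G X Y)
    (hX : X' ⊆ X) (hY : Y' ⊆ Y) : Anticomplete G X' Y' :=
  fun x hx y hy => h x (hX hx) y (hY hy)

theorem statement16_general [DecidableEq V] (G : SimpleGraph V) (u v : V)
    (P : G.Walk u v)
    (s t : V) (htwist : IsTwistPair G u v P s t)
    (hs : s ∈ P.support)
    (a : V) (ha : a ∈ (P.takeUntil s hs).support)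
    (hha : G.dist u a = G.dist u t)
    (c : V) (S : G.Walk u c) (hSpath : S.IsPath) (hSmono : MonoWalk G u S)
    (haS : a ∈ S.support)
    (T : G.Walk t v) (hTpath : T.IsPath) (hTmono : MonoWalk G u T)
    (hanti1 : Anticomplete G {z | z ∈ S.support ∧ z ≠ c} {z | z ∈ T.support})
    (hanti2 : Anticomplete G {z | z ∈ S.support} {z | z ∈ T.support ∧ z ≠ t})
    (x : V) (hx : x ∈ S.support) (hhx : G.dist u x = G.dist u s) :
    IsSidetrack G u v P s t (S.takeUntil x hx) := by
  have hprefix := S.support_takeUntil_subset_support hx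
  refine ⟨hSpath.takeUntil hx, hSmono.takeUntil hx, hhx, ⟨T, hTpath, hTmono, ?_, ?_⟩, ?_⟩
  · exact hanti1.mono
      (fun z hz => ⟨hprefix hz.1, hSmono.ne_of_mem_support_takeUntil hx hz.1 hz.2⟩) subset_rfl
  · exact hanti2.mono (fun z hz => hprefix hz) subset_rfl
  · intro _ a' ha' hha'
    obtain ⟨_, _, hPmono, -⟩ := htwist
    obtain rfl : a' = a := hPmono.eq_of_dist_eq ha' ha (hha'.trans hha.symm)
    exact hSmono.mem_support_takeUntil hx haS (hhx ▸ hPmono.dist_le_of_mem_support ha')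

/-- Let `P` be a shortest `uv`-trail of a `uv`-straight graph
`G` with twist pair `(s, t)`, and let `a` be the vertex of `P[u,s]` with
`h(a) = h(t)`. Let `S` be a monotone `uc`-path of `G` containing `a` with
`h(c) ≥ h(s)`, and let `T` be a monotone `tv`-path of `G` such that `S - c` is
anticomplete to `T` and `S` is anticomplete to `T - t`. Then the prefix
`S[u,x]` of `S`, where `x` is the vertex of `S` with `h(x) = h(s)`, is a
sidetrack for `P`. -/
theorem statement16 [Fintype V] [DecidableEq V] (G : SimpleGraph V) (u v : V)
    (hstraight : Straight G u v)
    (P : G.Walk u v) (hP : IsShortestTrail G u v P)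
    (s t : V) (htwist : IsTwistPair G u v P s t)
    (hs : s ∈ P.support)
    (a : V) (ha : a ∈ (P.takeUntil s hs).support)
    (hha : G.dist u a = G.dist u t)
    (c : V) (S : G.Walk u c) (hSpath : S.IsPath) (hSmono : MonoWalk G u S)
    (haS : a ∈ S.support) (hc : G.dist u s ≤ G.dist u c)
    (T : G.Walk t v) (hTpath : T.IsPath) (hTmono : MonoWalk G u T)
    (hanti1 : Anticomplete G {z | z ∈ S.support ∧ z ≠ c} {z | z ∈ T.support})
    (hanti2 : Anticomplete G {z | z ∈ S.support} {z | z ∈ T.support ∧ z ≠ t})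
    (x : V) (hx : x ∈ S.support) (hhx : G.dist u x = G.dist u s) :
    IsSidetrack G u v P s t (S.takeUntil x hx) :=
  statement16_general G u v P s t htwist hs a ha hha c S hSpath hSmono haS T hTpath hTmono hanti1
    hanti2 x hx hhx
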